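/- Let N ≥ 1, and for each t = 1,...,N let m_t ≤ E_* be a nonnegative integer and (z_{t,j})_{j=1}^{m_t} reals in [0,1] satisfying Π_{t=1}^N Π_{j=1}^{m_t} (1 + z_{t,j}²/σ²) ≤ (1 + N E_*/(d σ²))^{d E_*}. Then Σ_{t=1}^N Σ_{j=1}^{m_t} z_{t,j}² ≤ d E_* log(1 + N E_*/(d σ²)) / log(1 + 1/σ²). -/

import Mathlib

/-! Each factor satisfies `z² log(1 + 1/σ²) ≤ log(1 + z²/σ²)` for `z² ∈ [0, 1]`, by concavity of
`p ↦ log(1 + p s)` (Bernoulli's inequality `(1 + s)^p ≤ 1 + p s`). Summing these over all factors and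
taking logarithms of the product bound gives the claim. -/

open Real Finset

theorem Real.one_add_mul_pos {s p : ℝ} (hs : -1 < s) (hp0 : 0 ≤ p) (hp1 : p ≤ 1) :
    0 < 1 + p * s :=
  (rpow_pos_of_pos (neg_lt_iff_pos_add'.mp hs) p).trans_le
    (rpow_one_add_le_one_add_mul_self hs.le hp0 hp1)

theorem Real.mul_log_one_add_le_log_one_add_mul {s p : ℝ} (hs : -1 < s) (hp0 : 0 ≤ p)
    (hp1 : p ≤ 1) : p * log (1 + s) ≤ log (1 + p * s) := by
  have hpos : 0 < 1 + s := neg_lt_iff_pos_add'.mp hs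
  rw [← log_rpow hpos]
  exact log_le_log (rpow_pos_of_pos hpos p) (rpow_one_add_le_one_add_mul_self hs.le hp0 hp1)

theorem Finset.sum_mul_log_one_add_le_log_prod {ι : Type*} (t : Finset ι) {p : ι → ℝ} {s : ℝ}
    (hs : -1 < s) (hp0 : ∀ i ∈ t, 0 ≤ p i) (hp1 : ∀ i ∈ t, p i ≤ 1) :
    (∑ i ∈ t, p i) * log (1 + s) ≤ log (∏ i ∈ t, (1 + p i * s)) := by
  rw [log_prod fun i hi => (one_add_mul_pos hs (hp0 i hi) (hp1 i hi)).ne', sum_mul]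
  exact sum_le_sum fun i hi => mul_log_one_add_le_log_one_add_mul hs (hp0 i hi) (hp1 i hi)

theorem elliptical_potential_bound_general (N d Estar : ℕ) (σ : ℝ) (hσ : 0 < σ)
    (m : Fin N → ℕ)
    (z : (t : Fin N) → Fin (m t) → ℝ)
    (hz0 : ∀ t j, 0 ≤ z t j) (hz1 : ∀ t j, z t j ≤ 1)
    (hprod : ∏ t, ∏ j, (1 + z t j ^ 2 / σ ^ 2) ≤
      (1 + N * Estar / (d * σ ^ 2)) ^ (d * Estar)) :
    ∑ t, ∑ j, z t j ^ 2 ≤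
      d * Estar * Real.log (1 + N * Estar / (d * σ ^ 2)) / Real.log (1 + 1 / σ ^ 2) := by
  have hs : (-1 : ℝ) < 1 / σ ^ 2 := by linarith [show 0 < 1 / σ ^ 2 by positivity]
  have hsq0 (t j) : 0 ≤ z t j ^ 2 := sq_nonneg _
  have hsq1 (t j) : z t j ^ 2 ≤ 1 := pow_le_one₀ (hz0 t j) (hz1 t j)
  have hlog := sum_mul_log_one_add_le_log_prod (univ : Finset (Σ t, Fin (m t)))
    (p := fun x => z x.1 x.2 ^ 2) hs (fun x _ => hsq0 x.1 x.2) (fun x _ => hsq1 x.1 x.2)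
  simp only [Fintype.sum_sigma' (fun t j => z t j ^ 2), mul_one_div,
    Fintype.prod_sigma' (fun t j => 1 + z t j ^ 2 / σ ^ 2)] at hlog
  rw [le_div_iff₀ (log_pos (lt_add_of_pos_right 1 (by positivity)))]
  calc (∑ t, ∑ j, z t j ^ 2) * log (1 + 1 / σ ^ 2)
      ≤ log (∏ t, ∏ j, (1 + z t j ^ 2 / σ ^ 2)) := hlog
    _ ≤ log ((1 + N * Estar / (d * σ ^ 2)) ^ (d * Estar)) :=
        log_le_log (prod_pos fun t _ => prod_pos fun j _ => by positivity) hprod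
    _ = d * Estar * log (1 + N * Estar / (d * σ ^ 2)) := by rw [log_pow]; push_cast; ring

theorem elliptical_potential_bound (N d Estar : ℕ) (hN : 1 ≤ N)
    (hd : 0 < d) (hE : 0 < Estar) (σ : ℝ) (hσ : 0 < σ)
    (m : Fin N → ℕ) (hm : ∀ t, m t ≤ Estar)
    (z : (t : Fin N) → Fin (m t) → ℝ)
    (hz0 : ∀ t j, 0 ≤ z t j) (hz1 : ∀ t j, z t j ≤ 1)
    (hprod : ∏ t, ∏ j, (1 + z t j ^ 2 / σ ^ 2) ≤
      (1 + N * Estar / (d * σ ^ 2)) ^ (d * Estar)) :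
    ∑ t, ∑ j, z t j ^ 2 ≤
      d * Estar * Real.log (1 + N * Estar / (d * σ ^ 2)) / Real.log (1 + 1 / σ ^ 2) :=
  elliptical_potential_bound_general N d Estar σ hσ m z hz0 hz1 hprod
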